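/- Let Ω = (0,1) and suppose ã ∈ H¹(Ω) with ã ≥ 2a̲ > 0 and ‖ã'‖₂ ≤ a̲ / (C_{H¹→L^∞} ‖(−Δ + id)^{-1}‖_{L²→H²}). Then for every w ∈ H²(Ω) (with the relevant boundary conditions), ‖w''‖₂ ≤ (1/a̲) ‖(ã w')'‖₂ + ‖w‖₂. -/

import Mathlib

/-- The `L²(0,1)` norm of a function. -/
noncomputable def L2norm01 (f : ℝ → ℝ) : ℝ :=
  Real.sqrt (∫ s in (0:ℝ)..1, (f s) ^ 2)

/-- The sup norm of a function over `[0,1]`. -/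
noncomputable def supnorm01 (f : ℝ → ℝ) : ℝ :=
  ⨆ x : Set.Icc (0:ℝ) 1, |f x.1|

/-!
Since `ã ≥ 2a̲`, `2a̲‖w''‖₂ ≤ ‖ã w''‖₂ = ‖(ã w')' - ã' w'‖₂ ≤ ‖(ã w')'‖₂ + ‖ã'‖₂ ‖w'‖_∞`.
The smallness of `‖ã'‖₂` together with the interpolation bound for `‖w'‖_∞` makes the last
term at most `a̲ (‖w''‖₂ + ‖w‖₂)`, and the `a̲ ‖w''‖₂` part is absorbed on the left.

On `(0,1)` the classical derivatives agree with the derivatives within `[0,1]`, which are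
continuous on `[0,1]`; this is what puts every function involved in `L²(0,1)`.
-/

open MeasureTheory Set Topology

local notation "μ₀₁" => volume.restrict (Ioo (0:ℝ) 1)

theorem ContinuousOn.memLp_restrict_Ioo {E : Type*} [NormedAddCommGroup E] {F : ℝ → E} {a b : ℝ}
    (hF : ContinuousOn F (Icc a b)) (p : ENNReal) : MemLp F p (volume.restrict (Ioo a b)) := by
  obtain ⟨C, hC⟩ := isCompact_Icc.exists_bound_of_continuousOn hF
  exact .of_bound ((hF.mono Ioo_subset_Icc_self).aestronglyMeasurable measurableSet_Ioo) C
    (ae_restrict_of_forall_mem measurableSet_Ioo fun x hx => hC x (Ioo_subset_Icc_self hx))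

theorem memLp_restrict_Ioo_of_eqOn {E : Type*} [NormedAddCommGroup E] {f F : ℝ → E} {a b : ℝ}
    (hF : ContinuousOn F (Icc a b)) (hfF : EqOn f F (Ioo a b)) (p : ENNReal) :
    MemLp f p (volume.restrict (Ioo a b)) :=
  (hF.memLp_restrict_Ioo p).ae_eq <|
    ae_restrict_of_forall_mem measurableSet_Ioo fun _ hx => (hfF hx).symm

theorem L2norm01_eq_sqrt_integral (f : ℝ → ℝ) :
    L2norm01 f = Real.sqrt (∫ x, f x ^ 2 ∂μ₀₁) := by
  rw [L2norm01, intervalIntegral.integral_of_le zero_le_one, integral_Ioc_eq_integral_Ioo]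

theorem L2norm01_congr {f g : ℝ → ℝ} (h : EqOn f g (Ioo 0 1)) : L2norm01 f = L2norm01 g := by
  simp only [L2norm01_eq_sqrt_integral]
  rw [setIntegral_congr_fun measurableSet_Ioo fun x hx => by rw [h hx]]

theorem L2norm01_const_mul (c : ℝ) (f : ℝ → ℝ) :
    L2norm01 (fun x => c * f x) = |c| * L2norm01 f := by
  simp only [L2norm01, mul_pow, intervalIntegral.integral_const_mul]
  rw [Real.sqrt_mul (sq_nonneg c), Real.sqrt_sq_eq_abs]

theorem L2norm01_eq_toReal_eLpNorm {f : ℝ → ℝ} (hf : MemLp f 2 μ₀₁) :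
    L2norm01 f = (eLpNorm f 2 μ₀₁).toReal := by
  rw [hf.eLpNorm_eq_integral_rpow_norm two_ne_zero ENNReal.ofNat_ne_top,
    ENNReal.toReal_ofReal (by positivity), L2norm01_eq_sqrt_integral, Real.sqrt_eq_rpow]
  norm_num

theorem L2norm01_le_of_abs_le {f g : ℝ → ℝ} (hg : MemLp g 2 μ₀₁) (hf : AEStronglyMeasurable f μ₀₁)
    (h : ∀ x ∈ Ioo 0 1, |f x| ≤ |g x|) : L2norm01 f ≤ L2norm01 g := by
  have hfg : ∀ᵐ x ∂μ₀₁, ‖f x‖ ≤ ‖g x‖ := ae_restrict_of_forall_mem measurableSet_Ioo h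
  rw [L2norm01_eq_toReal_eLpNorm hg, L2norm01_eq_toReal_eLpNorm (hg.of_le hf hfg)]
  exact ENNReal.toReal_mono hg.eLpNorm_ne_top (eLpNorm_mono_ae hfg)

theorem L2norm01_sub_le {f g : ℝ → ℝ} (hf : MemLp f 2 μ₀₁) (hg : MemLp g 2 μ₀₁) :
    L2norm01 (f - g) ≤ L2norm01 f + L2norm01 g := by
  rw [L2norm01_eq_toReal_eLpNorm hf, L2norm01_eq_toReal_eLpNorm hg,
    L2norm01_eq_toReal_eLpNorm (hf.sub hg)]
  exact ENNReal.toReal_le_add (eLpNorm_sub_le hf.1 hg.1 one_le_two) hf.eLpNorm_ne_top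
    hg.eLpNorm_ne_top

theorem mul_L2norm01_le_L2norm01_mul {a f : ℝ → ℝ} {c : ℝ} (hc : 0 ≤ c)
    (haf : MemLp (fun x => a x * f x) 2 μ₀₁) (hf : AEStronglyMeasurable f μ₀₁)
    (hca : ∀ x ∈ Ioo (0:ℝ) 1, c ≤ a x) : c * L2norm01 f ≤ L2norm01 (fun x => a x * f x) := by
  rw [← abs_of_nonneg hc, ← L2norm01_const_mul]
  refine L2norm01_le_of_abs_le haf (hf.const_mul c) fun x hx => ?_
  rw [abs_mul, abs_mul]
  gcongr
  exact hca x hx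

theorem L2norm01_mul_le_mul_of_abs_le {f g : ℝ → ℝ} {M : ℝ} (hf : MemLp f 2 μ₀₁)
    (hg : AEStronglyMeasurable g μ₀₁) (hgM : ∀ x ∈ Ioo (0:ℝ) 1, |g x| ≤ M) :
    L2norm01 (fun x => f x * g x) ≤ L2norm01 f * M := by
  have hM : 0 ≤ M := (abs_nonneg _).trans (hgM (1 / 2) (by norm_num))
  rw [mul_comm, ← abs_of_nonneg hM, ← L2norm01_const_mul]
  refine L2norm01_le_of_abs_le (hf.const_mul M) (hf.1.mul hg) fun x hx => ?_
  rw [abs_mul, abs_mul, mul_comm, abs_of_nonneg hM]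
  gcongr
  exact hgM x hx

theorem abs_le_supnorm01 {f F : ℝ → ℝ} (hF : ContinuousOn F (Icc 0 1)) (hfF : EqOn f F (Ioo 0 1))
    {x : ℝ} (hx : x ∈ Icc 0 1) : |f x| ≤ supnorm01 f := by
  refine le_ciSup (f := fun y : Icc (0:ℝ) 1 => |f y|) ?_ ⟨x, hx⟩
  obtain ⟨K, hK⟩ := isCompact_Icc.exists_bound_of_continuousOn hF
  refine ⟨max K (max |f 0| |f 1|), ?_⟩
  rintro _ ⟨⟨y, hy⟩, rfl⟩
  rcases eq_endpoints_or_mem_Ioo_of_mem_Icc hy with rfl | rfl | hy'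
  · exact le_max_of_le_right (le_max_left _ _)
  · exact le_max_of_le_right (le_max_right _ _)
  · exact le_max_of_le_left ((congrArg abs (hfF hy')).trans_le (hK y hy))

theorem supnorm01_nonneg (f : ℝ → ℝ) : 0 ≤ supnorm01 f :=
  Real.iSup_nonneg fun _ => abs_nonneg _

theorem eqOn_deriv_derivWithin_Icc (f : ℝ → ℝ) (a b : ℝ) :
    EqOn (deriv f) (derivWithin f (Icc a b)) (Ioo a b) := fun _ hx =>
  (derivWithin_of_mem_nhds (Icc_mem_nhds hx.1 hx.2)).symm

theorem eqOn_deriv_deriv_derivWithin_Icc (f : ℝ → ℝ) (a b : ℝ) :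
    EqOn (deriv (deriv f)) (derivWithin (derivWithin f (Icc a b)) (Icc a b)) (Ioo a b) :=
  fun x hx => by
    rw [((eqOn_deriv_derivWithin_Icc f a b).eventuallyEq_of_mem (isOpen_Ioo.mem_nhds hx)).deriv_eq]
    exact eqOn_deriv_derivWithin_Icc _ a b hx

theorem mul_L2norm01_deriv_deriv_le {a w : ℝ → ℝ} {c : ℝ} (hc : 0 ≤ c)
    (ha : ContDiffOn ℝ 1 a (Icc 0 1)) (hw : ContDiffOn ℝ 2 w (Icc 0 1))
    (hca : ∀ x ∈ Ioo (0:ℝ) 1, c ≤ a x) :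
    c * L2norm01 (deriv (deriv w)) ≤
      L2norm01 (deriv fun x => a x * deriv w x) + L2norm01 (deriv a) * supnorm01 (deriv w) := by
  have hIcc : UniqueDiffOn ℝ (Icc (0:ℝ) 1) := uniqueDiffOn_Icc zero_lt_one
  have hW : ContDiffOn ℝ 1 (derivWithin w (Icc 0 1)) (Icc 0 1) := hw.derivWithin hIcc le_rfl
  have ha'c := ha.continuousOn_derivWithin hIcc le_rfl
  have hw'c := hW.continuousOn
  have hw''c := hW.continuousOn_derivWithin hIcc le_rfl
  have ha' := eqOn_deriv_derivWithin_Icc a 0 1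
  have hw' := eqOn_deriv_derivWithin_Icc w 0 1
  have hw'' := eqOn_deriv_deriv_derivWithin_Icc w 0 1
  have hflux : EqOn (deriv fun x => a x * deriv w x)
      (fun x => deriv a x * deriv w x + a x * deriv (deriv w) x) (Ioo 0 1) := fun x hx => by
    have hnhds : Icc (0:ℝ) 1 ∈ 𝓝 x := Icc_mem_nhds hx.1 hx.2
    have hdw : DifferentiableAt ℝ (deriv w) x :=
      ((hW.differentiableOn one_ne_zero).differentiableAt hnhds).congr_of_eventuallyEq
        (hw'.eventuallyEq_of_mem (isOpen_Ioo.mem_nhds hx))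
    exact deriv_fun_mul ((ha.differentiableOn one_ne_zero).differentiableAt hnhds) hdw
  calc c * L2norm01 (deriv (deriv w))
      ≤ L2norm01 (fun x => a x * deriv (deriv w) x) :=
        mul_L2norm01_le_L2norm01_mul hc
          (memLp_restrict_Ioo_of_eqOn (ha.continuousOn.mul hw''c)
            (fun x hx => by simp only [Pi.mul_apply, hw'' hx]) 2)
          (memLp_restrict_Ioo_of_eqOn hw''c hw'' 2).1 hca
    _ = L2norm01 ((deriv fun x => a x * deriv w x) - fun x => deriv a x * deriv w x) :=
        L2norm01_congr fun x hx => by simp only [Pi.sub_apply, hflux hx]; ring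
    _ ≤ L2norm01 (deriv fun x => a x * deriv w x) + L2norm01 (fun x => deriv a x * deriv w x) :=
        L2norm01_sub_le
          (memLp_restrict_Ioo_of_eqOn ((ha'c.mul hw'c).add (ha.continuousOn.mul hw''c))
            (fun x hx => by
              simp only [Pi.add_apply, Pi.mul_apply, hflux hx, ha' hx, hw' hx, hw'' hx]) 2)
          (memLp_restrict_Ioo_of_eqOn (ha'c.mul hw'c)
            (fun x hx => by simp only [Pi.mul_apply, ha' hx, hw' hx]) 2)
    _ ≤ _ := by
        gcongr
        exact L2norm01_mul_le_mul_of_abs_le (memLp_restrict_Ioo_of_eqOn ha'c ha' 2)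
          (memLp_restrict_Ioo_of_eqOn hw'c hw' 2).1
          fun x hx => abs_le_supnorm01 hw'c hw' (Ioo_subset_Icc_self hx)

/-- Elliptic-regularity type estimate on `Ω = (0,1)`: if `ã ≥ 2a̲ > 0` and
`‖ã'‖₂ ≤ a̲/(C_{H¹→L^∞}·‖(−Δ+id)⁻¹‖_{L²→H²})`, then for every `w ∈ H²`
(satisfying the interpolation bound `‖w'‖_∞ ≤ C_{H¹→L^∞}‖(−Δ+id)⁻¹‖(‖w''‖₂+‖w‖₂)`
coming from the resolvent estimate), `‖w''‖₂ ≤ (1/a̲)‖(ã w')'‖₂ + ‖w‖₂`. -/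
theorem second_derivative_estimate
    (atil w : ℝ → ℝ) (abar CH1Linf Cres : ℝ)
    (habar : 0 < abar) (hC : 0 < CH1Linf) (hCres : 0 < Cres)
    (hatil : ContDiffOn ℝ 1 atil (Set.Icc 0 1))
    (hw : ContDiffOn ℝ 2 w (Set.Icc 0 1))
    (hage : ∀ x ∈ Set.Icc (0:ℝ) 1, 2 * abar ≤ atil x)
    (hasmall : L2norm01 (deriv atil) ≤ abar / (CH1Linf * Cres))
    -- interpolation bound `‖w'‖_∞ ≤ C_{H¹→L^∞}‖(−Δ+id)⁻¹‖_{L²→H²}(‖w''‖₂ + ‖w‖₂)`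
    (hinterp : supnorm01 (deriv w) ≤
      CH1Linf * Cres * (L2norm01 (deriv (deriv w)) + L2norm01 w)) :
    L2norm01 (deriv (deriv w)) ≤
      (1 / abar) * L2norm01 (fun x => deriv (fun y => atil y * deriv w y) x) +
        L2norm01 w := by
  have hcoercive := mul_L2norm01_deriv_deriv_le (by positivity : 0 ≤ 2 * abar) hatil hw
    fun x hx => hage x (Ioo_subset_Icc_self hx)
  have hperturbation : L2norm01 (deriv atil) * supnorm01 (deriv w) ≤
      abar * (L2norm01 (deriv (deriv w)) + L2norm01 w) := by
    have hCC : CH1Linf * Cres ≠ 0 := (mul_pos hC hCres).ne'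
    calc _ ≤ abar / (CH1Linf * Cres) * (CH1Linf * Cres * _) :=
          mul_le_mul hasmall hinterp (supnorm01_nonneg _) ((Real.sqrt_nonneg _).trans hasmall)
      _ = _ := by field_simp
  rw [one_div, inv_mul_eq_div, div_add' _ _ _ habar.ne', le_div_iff₀ habar]
  linarith
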